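/- There exist sequences a, b, c : Fin 5 → ℝ with equal means (∑ a = ∑ b = ∑ c), such that c l > a l for at least 4 indices l, and b l > a l for at least 4 indices l, yet the median of a is strictly greater than the median of b. -/

import Mathlib

/-!
Winning an instance is a pointwise comparison, while the median only sees the middle order
statistic. Take `a = (0, 0, 10, 10, 10)`: a system that beats `a` by `1` on four instances and
loses the middle one by `4` has the same total, yet its median drops from `10` to `6`.
Choosing both witnesses monotone makes their medians readable without sorting.
-/

/-- Median of a finite sequence: middle element (for n = 5, the 3rd smallest). -/
noncomputable def median {n : ℕ} (x : Fin n → ℝ) : ℝ :=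
  (Multiset.sort (Multiset.map x Finset.univ.val) (· ≤ ·)).getD (n / 2) 0

theorem median_eq_of_monotone {n : ℕ} {x : Fin n → ℝ} (hx : Monotone x) (hn : 0 < n) :
    median x = x ⟨n / 2, Nat.div_lt_self hn one_lt_two⟩ := by
  have hsorted : (List.ofFn x).Pairwise (· ≤ ·) :=
    List.sortedLE_iff_pairwise.mp (List.sortedLE_ofFn_iff.mpr hx)
  rw [median, Fin.univ_val_map, Multiset.coe_sort, List.mergeSort_eq_self _ hsorted]
  simp [Nat.div_lt_self hn one_lt_two]

/-- Motivating example: three systems with equal means, where `c` and `b` beat `a`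
on at least 4 of 5 instances, yet the median of `a` exceeds the median of `b`. -/
theorem motivating_example :
    ∃ a b c : Fin 5 → ℝ,
      (∑ l, a l) = (∑ l, b l) ∧ (∑ l, b l) = (∑ l, c l) ∧
      (Finset.univ.filter (fun l => c l > a l)).card ≥ 4 ∧
      (Finset.univ.filter (fun l => b l > a l)).card ≥ 4 ∧
      median a > median b := by
  refine ⟨![0, 0, 10, 10, 10], ![1, 1, 6, 11, 11], ![1, 1, 11, 11, 6], ?_, ?_, ?_, ?_, ?_⟩
  · simp [Fin.sum_univ_five]; norm_num
  · simp [Fin.sum_univ_five]; norm_num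
  · rw [Finset.card_filter, Fin.sum_univ_five]
    simp; norm_num
  · rw [Finset.card_filter, Fin.sum_univ_five]
    simp; norm_num
  · have ha : Monotone (![0, 0, 10, 10, 10] : Fin 5 → ℝ) :=
      Fin.monotone_iff_le_succ.mpr fun i => by fin_cases i <;> simp
    have hb : Monotone (![1, 1, 6, 11, 11] : Fin 5 → ℝ) :=
      Fin.monotone_iff_le_succ.mpr fun i => by fin_cases i <;> simp; norm_num
    rw [median_eq_of_monotone ha (by norm_num), median_eq_of_monotone hb (by norm_num)]
    norm_num
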